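/- Let G be a finite simple graph in which each edge belongs to at most one even cycle, let V be a subset of the vertices of G, and let M, M_1, M_2 be matchings of G each of whose vertex set is exactly V. If C is a cycle of G all of whose edges lie in the symmetric difference of M_1 and M_2, then M ∩ E(C) is a perfect matching of C, i.e., it consists of alternate edges of C and covers every vertex of C (so it is one of the two perfect matchings of the even cycle C). -/

import Mathlib

set_option linter.unusedSectionVars false
set_option maxHeartbeats 1000000


variable {V : Type} [Fintype V] [DecidableEq V]

/-- `M` is a matching of `G`: a finset of edges of `G` that pairwise share no vertex. -/
def IsGMatching (G : SimpleGraph V) (M : Finset (Sym2 V)) : Prop :=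
  (M : Set (Sym2 V)) ⊆ G.edgeSet ∧
    (M : Set (Sym2 V)).Pairwise fun e f => ∀ v : V, ¬ (v ∈ e ∧ v ∈ f)

/-- The set of vertices covered by a finset of edges. -/
def edgeVerts (F : Finset (Sym2 V)) : Set V := {v | ∃ e ∈ F, v ∈ e}

/-- `m_k(G)`: the number of `k`-matchings of `G`. -/
noncomputable def mCount (G : SimpleGraph V) (k : ℕ) : ℕ :=
  Nat.card {M : Finset (Sym2 V) // IsGMatching G M ∧ M.card = k}

/-- `Cy` is the edge set of a cycle of `G`. -/
def IsCycleEdges (G : SimpleGraph V) (Cy : Finset (Sym2 V)) : Prop :=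
  ∃ (v : V) (w : G.Walk v v), w.IsCycle ∧ w.edges.toFinset = Cy

/-- `Cy` is the edge set of an even cycle of `G`. -/
def IsEvenCycleEdges (G : SimpleGraph V) (Cy : Finset (Sym2 V)) : Prop :=
  ∃ (v : V) (w : G.Walk v v), w.IsCycle ∧ Even w.length ∧ w.edges.toFinset = Cy

/-- Each edge of `G` belongs to at most one even cycle of `G`. -/
def EachEdgeInAtMostOneEvenCycle (G : SimpleGraph V) : Prop :=
  ∀ C₁ C₂ : Finset (Sym2 V), IsEvenCycleEdges G C₁ → IsEvenCycleEdges G C₂ →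
    ∀ e : Sym2 V, e ∈ C₁ → e ∈ C₂ → C₁ = C₂


-- basic matching lemmas
lemma matching_unique {G : SimpleGraph V} {M : Finset (Sym2 V)} (hM : IsGMatching G M)
    {e f : Sym2 V} {v : V} (he : e ∈ M) (hf : f ∈ M) (hv : v ∈ e) (hv' : v ∈ f) : e = f := by
  by_contra h
  exact hM.2 he hf h v ⟨hv, hv'⟩

noncomputable def pt (M : Finset (Sym2 V)) (v : V) : V :=
  if h : ∃ u, s(v, u) ∈ M then h.choose else v

lemma pt_spec {M : Finset (Sym2 V)} {v : V} (hv : v ∈ edgeVerts M) : s(v, pt M v) ∈ M := by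
  obtain ⟨e, he, hve⟩ := hv
  induction e with
  | _ a b =>
    have h : ∃ u, s(v, u) ∈ M := by
      rcases Sym2.mem_iff.mp hve with h | h
      · exact ⟨b, h ▸ he⟩
      · exact ⟨a, by subst h; rwa [Sym2.eq_swap]⟩
    rw [pt, dif_pos h]
    exact h.choose_spec

lemma pt_eq {G : SimpleGraph V} {M : Finset (Sym2 V)} (hM : IsGMatching G M)
    {v u : V} (h : s(v, u) ∈ M) : pt M v = u := by
  have hv : v ∈ edgeVerts M := ⟨_, h, Sym2.mem_mk_left _ _⟩
  have := matching_unique hM (pt_spec hv) h (Sym2.mem_mk_left _ _) (Sym2.mem_mk_left _ _)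
  exact (Sym2.congr_right.mp this)

lemma mem_eq_pt {G : SimpleGraph V} {M : Finset (Sym2 V)} (hM : IsGMatching G M)
    {e : Sym2 V} {u : V} (he : e ∈ M) (hu : u ∈ e) : e = s(u, pt M u) := by
  induction e with
  | _ a b =>
    rcases Sym2.mem_iff.mp hu with h | h
    · subst h; rw [pt_eq hM he]
    · subst h; rw [Sym2.eq_swap] at he ⊢; rw [pt_eq hM he]

lemma pt_ne {G : SimpleGraph V} {M : Finset (Sym2 V)} (hM : IsGMatching G M)
    {v : V} (hv : v ∈ edgeVerts M) : pt M v ≠ v := by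
  have := hM.1 (pt_spec hv)
  rw [SimpleGraph.mem_edgeSet] at this
  intro h
  rw [h] at this
  exact this.ne rfl

lemma pt_mem_verts {M : Finset (Sym2 V)} {v : V} (hv : v ∈ edgeVerts M) :
    pt M v ∈ edgeVerts M := ⟨_, pt_spec hv, Sym2.mem_mk_right _ _⟩

lemma pt_invol {G : SimpleGraph V} {M : Finset (Sym2 V)} (hM : IsGMatching G M)
    {v : V} (hv : v ∈ edgeVerts M) : pt M (pt M v) = v :=
  pt_eq hM (by rw [Sym2.eq_swap]; exact pt_spec hv)

lemma matching_subset {G : SimpleGraph V} {M P : Finset (Sym2 V)} (hM : IsGMatching G M)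
    (h : P ⊆ M) : IsGMatching G P :=
  ⟨fun e he => hM.1 (h he), hM.2.mono (by exact_mod_cast h)⟩


def mkWalk (G : SimpleGraph V) (x : ℕ → V) (hx : ∀ i, G.Adj (x i) (x (i + 1))) :
    (n s : ℕ) → G.Walk (x s) (x (s + n))
  | 0, _ => SimpleGraph.Walk.nil
  | n + 1, s =>
    SimpleGraph.Walk.cons (hx s)
      ((mkWalk G x hx n (s + 1)).copy rfl (congrArg x (by omega)))

lemma mkWalk_length (G : SimpleGraph V) (x : ℕ → V) (hx : ∀ i, G.Adj (x i) (x (i + 1)))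
    (n : ℕ) : ∀ s, (mkWalk G x hx n s).length = n := by
  induction n with
  | zero => intro s; rfl
  | succ n ih => intro s; simp [mkWalk, ih]

lemma mkWalk_edges (G : SimpleGraph V) (x : ℕ → V) (hx : ∀ i, G.Adj (x i) (x (i + 1)))
    (n : ℕ) : ∀ s, (mkWalk G x hx n s).edges
      = (List.range n).map (fun i => s(x (s + i), x (s + i + 1))) := by
  induction n with
  | zero => intro s; rfl
  | succ n ih =>
    intro s
    rw [List.range_succ_eq_map]
    simp only [mkWalk, SimpleGraph.Walk.edges_cons, SimpleGraph.Walk.edges_copy, ih,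
      List.map_cons, List.map_map]
    refine congrArg₂ List.cons (by simp) ?_
    apply List.map_congr_left
    intro i _
    have h1 : s + (i + 1) = s + 1 + i := by omega
    simp [Function.comp_apply, Nat.succ_eq_add_one, h1]

lemma mkWalk_support (G : SimpleGraph V) (x : ℕ → V) (hx : ∀ i, G.Adj (x i) (x (i + 1)))
    (n : ℕ) : ∀ s, (mkWalk G x hx n s).support
      = (List.range (n + 1)).map (fun i => x (s + i)) := by
  induction n with
  | zero => intro s; rw [List.range_succ]; simp [mkWalk]
  | succ n ih =>
    intro s
    rw [List.range_succ_eq_map]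
    simp only [mkWalk, SimpleGraph.Walk.support_cons, SimpleGraph.Walk.support_copy, ih,
      List.map_cons, List.map_map]
    refine congrArg₂ List.cons (by simp) ?_
    apply List.map_congr_left
    intro i _
    have h1 : s + (i + 1) = s + 1 + i := by omega
    simp [Function.comp_apply, Nat.succ_eq_add_one, h1]

lemma core_even_cycle (G : SimpleGraph V) {M N : Finset (Sym2 V)}
    (hM : IsGMatching G M) (hN : IsGMatching G N)
    (hMN : edgeVerts M = edgeVerts N) {v : V} (hv : v ∈ edgeVerts M)
    (hne : pt M v ≠ pt N v) :
    ∃ Cy : Finset (Sym2 V), IsEvenCycleEdges G Cy ∧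
      s(v, pt M v) ∈ Cy ∧ s(v, pt N v) ∈ Cy := by
  classical
  set x : ℕ → V := fun n => n.rec v (fun m acc => if Even m then pt M acc else pt N acc) with hxdef
  have hx0 : x 0 = v := rfl
  have hxs : ∀ n, x (n + 1) = if Even n then pt M (x n) else pt N (x n) := fun n => rfl
  have hmem : ∀ n, x n ∈ edgeVerts M := by
    intro n
    induction n with
    | zero => exact hx0 ▸ hv
    | succ n ih =>
      rw [hxs n]
      by_cases h : Even n
      · rw [if_pos h]; exact pt_mem_verts ih
      · rw [if_neg h]; rw [hMN]; exact pt_mem_verts (hMN ▸ ih)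
  have hmemN : ∀ n, x n ∈ edgeVerts N := fun n => hMN ▸ hmem n
  have hstepM : ∀ n, Even n → s(x n, x (n + 1)) ∈ M := by
    intro n h; rw [hxs n, if_pos h]; exact pt_spec (hmem n)
  have hstepN : ∀ n, ¬Even n → s(x n, x (n + 1)) ∈ N := by
    intro n h; rw [hxs n, if_neg h]; exact pt_spec (hmemN n)
  have hadj : ∀ n, G.Adj (x n) (x (n + 1)) := by
    intro n
    by_cases h : Even n
    · exact (G.mem_edgeSet).mp (hM.1 (hstepM n h))
    · exact (G.mem_edgeSet).mp (hN.1 (hstepN n h))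
  have hbackM : ∀ n, Even n → pt M (x (n + 1)) = x n := by
    intro n h
    exact pt_eq hM (by rw [Sym2.eq_swap]; exact hstepM n h)
  have hbackN : ∀ n, ¬Even n → pt N (x (n + 1)) = x n := by
    intro n h
    exact pt_eq hN (by rw [Sym2.eq_swap]; exact hstepN n h)
  -- existence of a repeat
  have hrep : ∃ k, 0 < k ∧ ∃ j, j < k ∧ x j = x k := by
    obtain ⟨a, b, hab, heq⟩ := Finite.exists_ne_map_eq_of_infinite x
    rcases hab.lt_or_gt with h | h
    · exact ⟨b, by omega, a, h, heq⟩
    · exact ⟨a, by omega, b, h, heq.symm⟩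
  obtain ⟨k, ⟨hkpos, j, hjk, hxjk⟩, hmink⟩ :
      ∃ k, (0 < k ∧ ∃ j, j < k ∧ x j = x k) ∧
        ∀ m, m < k → ¬(0 < m ∧ ∃ j, j < m ∧ x j = x m) :=
    ⟨Nat.find hrep, Nat.find_spec hrep, fun m h => Nat.find_min hrep h⟩
  have hdist : ∀ i i', i < i' → i' < k → x i ≠ x i' := by
    intro i i' h1 h2 heq
    exact hmink i' h2 ⟨by omega, i, h1, heq⟩
  -- the first repeat is the starting vertex
  have hj0 : j = 0 := by
    by_contra hj
    obtain ⟨j', rfl⟩ : ∃ j', j = j' + 1 := ⟨j - 1, by omega⟩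
    obtain ⟨k', rfl⟩ : ∃ k', k = k' + 1 := ⟨k - 1, by omega⟩
    by_cases hpj : Even j' <;> by_cases hpk : Even k'
    · -- both predecessor steps via M
      have e1 := hbackM j' hpj
      have e2 := hbackM k' hpk
      rw [hxjk] at e1
      exact hdist j' k' (by omega) (by omega) (e1 ▸ e2 ▸ rfl)
    · -- j' even, k' odd
      have hjodd : ¬Even (j' + 1) := by simpa [Nat.even_add_one] using hpj
      have hstep : x (j' + 2) = pt N (x (j' + 1)) := by
        rw [hxs (j' + 1), if_neg hjodd]
      have hne1 : k' ≠ j' + 1 := by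
        intro h
        subst h
        rw [← hxjk] at hstep
        exact pt_ne hN (hmemN (j' + 1)) hstep.symm
      have hne2 : k' ≠ j' + 2 := by
        intro h
        apply hpk
        subst h
        rcases hpj with ⟨m, hm⟩
        exact ⟨m + 1, by omega⟩
      have hge : j' + 3 ≤ k' := by omega
      have e2 : pt N (x (k' + 1)) = x k' := hbackN k' hpk
      rw [← hxjk, ← hstep] at e2
      exact hdist (j' + 2) k' (by omega) (by omega) e2
    · -- j' odd, k' even
      have hjev : Even (j' + 1) := by simpa [Nat.even_add_one] using hpj
      have hstep : x (j' + 2) = pt M (x (j' + 1)) := by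
        rw [hxs (j' + 1), if_pos hjev]
      have hne1 : k' ≠ j' + 1 := by
        intro h
        subst h
        rw [← hxjk] at hstep
        exact pt_ne hM (hmem (j' + 1)) hstep.symm
      have hne2 : k' ≠ j' + 2 := by
        intro h
        rw [h] at hpk
        simp [Nat.even_add_one, parity_simps] at hpk
        exact hpj (by simpa using hpk)
      have hge : j' + 3 ≤ k' := by omega
      have e2 : pt M (x (k' + 1)) = x k' := hbackM k' hpk
      rw [← hxjk, ← hstep] at e2
      exact hdist (j' + 2) k' (by omega) (by omega) e2
    · -- both predecessor steps via N
      have e1 := hbackN j' hpj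
      have e2 := hbackN k' hpk
      rw [hxjk] at e1
      exact hdist j' k' (by omega) (by omega) (e1 ▸ e2 ▸ rfl)
  subst hj0
  have hxk : x k = v := hx0 ▸ hxjk.symm
  -- k is even
  have hkeven : Even k := by
    by_contra hko
    obtain ⟨k', rfl⟩ : ∃ k', k = k' + 1 := ⟨k - 1, by omega⟩
    have hpk : Even k' := by simpa [Nat.even_add_one] using hko
    have e2 : pt M (x (k' + 1)) = x k' := hbackM k' hpk
    rw [hxk] at e2
    have hx1 : x 1 = pt M v := by
      have h := hxs 0
      rw [if_pos Even.zero, hx0] at h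
      exact h
    rcases Nat.lt_trichotomy k' 1 with h | h | h
    · have hk0 : k' = 0 := by omega
      subst hk0
      rw [hx0] at e2
      exact pt_ne hM hv e2
    · -- k = 2, but k odd
      exact hko (by rw [h]; decide)
    · exact hdist 1 k' h (by omega) (by rw [hx1, e2])
  have hk2 : k ≠ 2 := by
    intro h
    subst h
    have h1 : ¬Even 1 := by decide
    have e2 : pt N (x 2) = x 1 := hbackN 1 h1
    rw [hxk] at e2
    have hx1 : x 1 = pt M v := by
      have h := hxs 0
      rw [if_pos Even.zero, hx0] at h
      exact h
    rw [hx1] at e2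
    exact hne e2.symm
  have hk4 : 4 ≤ k := by
    rcases hkeven with ⟨m, hm⟩
    omega
  -- distinctness of the edges
  have hedgeinj : ∀ i i', i < i' → i' < k →
      s(x i, x (i + 1)) ≠ s(x i', x (i' + 1)) := by
    intro i i' h1 h2 heq
    rw [Sym2.eq_iff] at heq
    rcases heq with ⟨ha, _⟩ | ⟨ha, hb⟩
    · exact hdist i i' h1 h2 ha
    · rcases Nat.lt_trichotomy (i + 1) i' with h | h | h
      · exact hdist (i + 1) i' h h2 hb
      · subst h
        rcases Nat.lt_trichotomy (i + 2) k with hh | hh | hh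
        · exact hdist i (i + 2) (by omega) hh ha
        · have : x i = x 0 := by rw [hx0, ← hxk, ← hh, ha]
          rcases Nat.eq_zero_or_pos i with h0 | h0
          · omega
          · exact hdist 0 i h0 (by omega) this.symm
        · omega
      · omega
  -- build the walk
  let w0 := mkWalk G x hadj k 0
  have h0k : x (0 + k) = v := by rw [Nat.zero_add, hxk]
  let w : G.Walk v v := w0.copy hx0 h0k
  have hwlen : w.length = k := by
    rw [SimpleGraph.Walk.length_copy, mkWalk_length]
  have hwedges : w.edges = (List.range k).map (fun i => s(x i, x (i + 1))) := by
    rw [SimpleGraph.Walk.edges_copy, mkWalk_edges]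
    apply List.map_congr_left
    intro i _
    rw [Nat.zero_add]
  have hwsupp : w.support = x 0 :: (List.range k).map (fun i => x (i + 1)) := by
    rw [SimpleGraph.Walk.support_copy, mkWalk_support, List.range_succ_eq_map]
    simp only [List.map_cons, List.map_map]
    congr 1
    apply List.map_congr_left
    intro i _
    simp only [Function.comp_apply, Nat.zero_add, Nat.succ_eq_add_one]
  have hnodupE : w.edges.Nodup := by
    rw [hwedges]
    refine List.Nodup.map_on ?_ List.nodup_range
    intro i hi i' hi' heq
    rw [List.mem_range] at hi hi'
    rcases Nat.lt_trichotomy i i' with h | h | h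
    · exact absurd heq (hedgeinj i i' h hi')
    · exact h
    · exact absurd heq.symm (hedgeinj i' i h hi)
  have hnodupT : w.support.tail.Nodup := by
    rw [hwsupp]
    simp only [List.tail_cons]
    refine List.Nodup.map_on ?_ List.nodup_range
    intro i hi i' hi' heq
    rw [List.mem_range] at hi hi'
    by_contra hne'
    have key : ∀ a a', a < a' → a' < k → x (a + 1) = x (a' + 1) → False := by
      intro a a' h1 h2 he
      rcases Nat.lt_trichotomy (a' + 1) k with h | h | h
      · exact hdist (a + 1) (a' + 1) (by omega) h he
      · have : x (a + 1) = x 0 := by rw [hx0, ← hxk, ← h, he]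
        exact hdist 0 (a + 1) (by omega) (by omega) this.symm
      · omega
    rcases Nat.lt_trichotomy i i' with h | h | h
    · exact key i i' h hi' heq
    · exact hne' h
    · exact key i' i h hi heq.symm
  have hcyc : w.IsCycle := by
    rw [SimpleGraph.Walk.isCycle_def]
    refine ⟨⟨hnodupE⟩, ?_, hnodupT⟩
    intro h
    have := congrArg SimpleGraph.Walk.length h
    rw [hwlen] at this
    simp only [SimpleGraph.Walk.length_nil] at this
    omega
  have heven : Even w.length := hwlen ▸ hkeven
  have hx1 : x 1 = pt M v := by
      have h := hxs 0
      rw [if_pos Even.zero, hx0] at h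
      exact h
  have hmem1 : s(v, pt M v) ∈ w.edges.toFinset := by
    rw [List.mem_toFinset, hwedges]
    refine List.mem_map.mpr ⟨0, List.mem_range.mpr (by omega), ?_⟩
    rw [hx0, Nat.zero_add, hx1]
  have hmem2 : s(v, pt N v) ∈ w.edges.toFinset := by
    rw [List.mem_toFinset, hwedges]
    refine List.mem_map.mpr ⟨k - 1, List.mem_range.mpr (by omega), ?_⟩
    have hko : ¬Even (k - 1) := by
      rcases hkeven with ⟨m, hm⟩
      rcases Nat.even_or_odd (k - 1) with h | h
      · rcases h with ⟨a, ha⟩; omega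
      · exact (Nat.not_even_iff_odd.mpr h)
    have e2 : pt N (x (k - 1 + 1)) = x (k - 1) := hbackN (k - 1) hko
    rw [show k - 1 + 1 = k by omega, hxk] at e2
    rw [show k - 1 + 1 = k by omega, hxk, ← e2, Sym2.eq_swap]
  exact ⟨w.edges.toFinset, ⟨v, w, hcyc, heven, rfl⟩, hmem1, hmem2⟩

lemma cycle_two_edges {G : SimpleGraph V} {v : V} {w : G.Walk v v} (hw : w.IsCycle)
    {u : V} (hu : u ∈ w.support) :
    ∃ e₁ e₂ : Sym2 V, e₁ ∈ w.edges ∧ e₂ ∈ w.edges ∧ e₁ ≠ e₂ ∧ u ∈ e₁ ∧ u ∈ e₂ := by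
  classical
  set c := w.rotate u hu with hc
  have hcyc : c.IsCycle := hw.rotate hu
  have hperm : ∀ e, e ∈ c.edges ↔ e ∈ w.edges :=
    fun e => (SimpleGraph.Walk.rotate_edges w u hu).mem_iff
  obtain ⟨y, hy, q, hq⟩ := SimpleGraph.Walk.not_nil_iff.mp hcyc.not_nil
  obtain ⟨z, hz, r, hr⟩ := SimpleGraph.Walk.not_nil_iff.mp
    (by rw [SimpleGraph.Walk.not_nil_iff_lt_length, SimpleGraph.Walk.length_reverse]
        exact lt_of_lt_of_le (by omega) hcyc.three_le_length : ¬c.reverse.Nil)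
  have he1 : s(u, y) ∈ c.edges := by rw [hq]; simp
  have he2 : s(u, z) ∈ c.edges := by
    have : s(u, z) ∈ c.reverse.edges := by rw [hr]; simp
    rw [SimpleGraph.Walk.edges_reverse, List.mem_reverse] at this
    exact this
  refine ⟨s(u, y), s(u, z), (hperm _).mp he1, (hperm _).mp he2, ?_, by simp, by simp⟩
  intro heq
  -- c.edges = s(u,y) :: q.edges  and  c.edges.reverse = s(u,z) :: r.edges
  have hce : c.edges = s(u, y) :: q.edges := by rw [hq]; simp
  have hcer : c.edges.reverse = s(u, z) :: r.edges := by
    rw [← SimpleGraph.Walk.edges_reverse, hr]; simp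
  have hlen : 3 ≤ c.edges.length := by
    rw [SimpleGraph.Walk.length_edges]; exact hcyc.three_le_length
  have hnd : c.edges.Nodup := hcyc.isCircuit.isTrail.edges_nodup
  have hce2 : c.edges = r.edges.reverse ++ [s(u, z)] := by
    rw [← List.reverse_reverse c.edges, hcer]; simp
  rcases hre : r.edges.reverse with _ | ⟨a, t⟩
  · rw [hre] at hce2; simp [hce2] at hlen
  · rw [hre] at hce2
    obtain ⟨ha, hqe⟩ := List.cons_eq_cons.mp (hce.symm.trans hce2)
    rw [hce] at hnd
    have : s(u, y) ∈ q.edges := by rw [hqe, heq]; simp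
    exact (List.nodup_cons.mp hnd).1 this

def sym2Finset : Sym2 V → Finset V :=
  Sym2.lift ⟨fun a b => {a, b}, fun a b => Finset.pair_comm a b⟩

lemma mem_sym2Finset {v : V} {e : Sym2 V} : v ∈ sym2Finset e ↔ v ∈ e := by
  induction e with
  | _ a b => simp [sym2Finset, Sym2.mem_iff]

lemma card_sym2Finset {e : Sym2 V} (h : ¬e.IsDiag) : (sym2Finset e).card = 2 := by
  induction e with
  | _ a b =>
    rw [Sym2.isDiag_iff_proj_eq] at h
    simp [sym2Finset, Finset.card_pair h]

lemma card_biUnion_matching {G : SimpleGraph V} {P : Finset (Sym2 V)}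
    (hP : IsGMatching G P) : (P.biUnion sym2Finset).card = 2 * P.card := by
  rw [Finset.card_biUnion]
  · rw [Finset.sum_congr rfl (fun e he => card_sym2Finset
      (G.not_isDiag_of_mem_edgeSet (hP.1 he)))]
    rw [Finset.sum_const, smul_eq_mul, mul_comm]
  · intro e he f hf hef
    rw [Function.onFun, Finset.disjoint_left]
    intro a ha ha'
    exact hP.2 he hf hef a ⟨mem_sym2Finset.mp ha, mem_sym2Finset.mp ha'⟩

lemma mem_biUnion_iff {P : Finset (Sym2 V)} {u : V} :
    u ∈ P.biUnion sym2Finset ↔ u ∈ edgeVerts P := by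
  rw [Finset.mem_biUnion]
  constructor
  · rintro ⟨e, he, hu⟩; exact ⟨e, he, mem_sym2Finset.mp hu⟩
  · rintro ⟨e, he, hu⟩; exact ⟨e, he, mem_sym2Finset.mpr hu⟩

lemma biUnion_eq_of_edgeVerts_eq {P Q : Finset (Sym2 V)}
    (h : edgeVerts P = edgeVerts Q) : P.biUnion sym2Finset = Q.biUnion sym2Finset := by
  ext u
  rw [mem_biUnion_iff, mem_biUnion_iff, h]

/-- Suppose each edge of `G` belongs to at most one even cycle. Let
`M, M₁, M₂` be matchings of `G`, each with vertex set `V₀`, and let `Cy` be a cycle of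
`G` contained in the symmetric difference of `M₁` and `M₂`. Then `M ∩ Cy` is a perfect
matching of the cycle `Cy`: it is a matching covering every vertex of `Cy` and consisting
of exactly half of the edges of `Cy` (alternate edges). -/

theorem stmt16 (G : SimpleGraph V) (hG : EachEdgeInAtMostOneEvenCycle G)
    (V₀ : Set V) (M M₁ M₂ : Finset (Sym2 V))
    (hM : IsGMatching G M) (hM₁ : IsGMatching G M₁) (hM₂ : IsGMatching G M₂)
    (hV : edgeVerts M = V₀) (hV₁ : edgeVerts M₁ = V₀) (hV₂ : edgeVerts M₂ = V₀)
    (Cy : Finset (Sym2 V)) (hCy : IsCycleEdges G Cy)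
    (hsub : Cy ⊆ (M₁ ∪ M₂) \ (M₁ ∩ M₂)) :
    IsGMatching G (M ∩ Cy) ∧ edgeVerts (M ∩ Cy) = edgeVerts Cy ∧
      2 * (M ∩ Cy).card = Cy.card := by
  classical
  obtain ⟨v0, w, hw, hE⟩ := hCy
  have hunion : ∀ e ∈ Cy, e ∈ M₁ ∨ e ∈ M₂ := fun e he =>
    Finset.mem_union.mp ((Finset.mem_sdiff.mp (hsub he)).1)
  have hnotboth : ∀ e ∈ Cy, ¬(e ∈ M₁ ∧ e ∈ M₂) := by
    intro e he hb
    exact (Finset.mem_sdiff.mp (hsub he)).2 (Finset.mem_inter.mpr hb)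
  have hvV₀ : ∀ u ∈ edgeVerts Cy, u ∈ V₀ := by
    rintro u ⟨e, he, hu⟩
    rcases hunion e he with h | h
    · exact hV₁ ▸ ⟨e, h, hu⟩
    · exact hV₂ ▸ ⟨e, h, hu⟩
  have htwo : ∀ u ∈ edgeVerts Cy,
      ∃ e₁ e₂ : Sym2 V, e₁ ∈ Cy ∧ e₂ ∈ Cy ∧ e₁ ≠ e₂ ∧ u ∈ e₁ ∧ u ∈ e₂ := by
    rintro u ⟨e, he, hu⟩
    have hew : e ∈ w.edges := by rw [← hE] at he; exact List.mem_toFinset.mp he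
    have hus : u ∈ w.support := by
      induction e with
      | _ a b =>
        rcases Sym2.mem_iff.mp hu with h | h
        · subst h; exact w.fst_mem_support_of_mem_edges hew
        · subst h; exact w.snd_mem_support_of_mem_edges hew
    obtain ⟨e₁, e₂, h1, h2, h12, hu1, hu2⟩ := cycle_two_edges hw hus
    exact ⟨e₁, e₂, hE ▸ List.mem_toFinset.mpr h1, hE ▸ List.mem_toFinset.mpr h2,
      h12, hu1, hu2⟩
  have hcovM₁ : ∀ u ∈ edgeVerts Cy, s(u, pt M₁ u) ∈ Cy := by
    intro u hu
    obtain ⟨e₁, e₂, h1, h2, h12, hu1, hu2⟩ := htwo u hu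
    have hone : e₁ ∈ M₁ ∨ e₂ ∈ M₁ := by
      rcases hunion e₁ h1 with h | h
      · exact Or.inl h
      · rcases hunion e₂ h2 with h' | h'
        · exact Or.inr h'
        · exact absurd (matching_unique hM₂ h h' hu1 hu2) h12
    rcases hone with h | h
    · rw [← mem_eq_pt hM₁ h hu1]; exact h1
    · rw [← mem_eq_pt hM₁ h hu2]; exact h2
  have hcovM₂ : ∀ u ∈ edgeVerts Cy, s(u, pt M₂ u) ∈ Cy := by
    intro u hu
    obtain ⟨e₁, e₂, h1, h2, h12, hu1, hu2⟩ := htwo u hu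
    have hone : e₁ ∈ M₂ ∨ e₂ ∈ M₂ := by
      rcases hunion e₁ h1 with h | h
      · rcases hunion e₂ h2 with h' | h'
        · exact absurd (matching_unique hM₁ h h' hu1 hu2) h12
        · exact Or.inr h'
      · exact Or.inl h
    rcases hone with h | h
    · rw [← mem_eq_pt hM₂ h hu1]; exact h1
    · rw [← mem_eq_pt hM₂ h hu2]; exact h2
  set C₁ := Cy ∩ M₁ with hC₁def
  set C₂ := Cy ∩ M₂ with hC₂def
  have hC₁m : IsGMatching G C₁ := matching_subset hM₁ Finset.inter_subset_right
  have hC₂m : IsGMatching G C₂ := matching_subset hM₂ Finset.inter_subset_right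
  have hC₁verts : edgeVerts C₁ = edgeVerts Cy := by
    apply Set.Subset.antisymm
    · rintro u ⟨e, he, hu⟩; exact ⟨e, (Finset.mem_inter.mp he).1, hu⟩
    · intro u hu
      have huV : u ∈ edgeVerts M₁ := by rw [hV₁]; exact hvV₀ u hu
      exact ⟨s(u, pt M₁ u), Finset.mem_inter.mpr ⟨hcovM₁ u hu, pt_spec huV⟩,
        Sym2.mem_mk_left _ _⟩
  have hC₂verts : edgeVerts C₂ = edgeVerts Cy := by
    apply Set.Subset.antisymm
    · rintro u ⟨e, he, hu⟩; exact ⟨e, (Finset.mem_inter.mp he).1, hu⟩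
    · intro u hu
      have huV : u ∈ edgeVerts M₂ := by rw [hV₂]; exact hvV₀ u hu
      exact ⟨s(u, pt M₂ u), Finset.mem_inter.mpr ⟨hcovM₂ u hu, pt_spec huV⟩,
        Sym2.mem_mk_left _ _⟩
  have hcard₁ : (Cy.biUnion sym2Finset).card = 2 * C₁.card := by
    rw [← biUnion_eq_of_edgeVerts_eq hC₁verts, card_biUnion_matching hC₁m]
  have hcard₂ : (Cy.biUnion sym2Finset).card = 2 * C₂.card := by
    rw [← biUnion_eq_of_edgeVerts_eq hC₂verts, card_biUnion_matching hC₂m]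
  have hCyunion : C₁ ∪ C₂ = Cy := by
    ext e
    simp only [hC₁def, hC₂def, Finset.mem_union, Finset.mem_inter]
    constructor
    · rintro (⟨h, _⟩ | ⟨h, _⟩) <;> exact h
    · intro h
      rcases hunion e h with h' | h'
      · exact Or.inl ⟨h, h'⟩
      · exact Or.inr ⟨h, h'⟩
  have hdisj : Disjoint C₁ C₂ := by
    rw [Finset.disjoint_left]
    intro e h1 h2
    rw [hC₁def, Finset.mem_inter] at h1
    rw [hC₂def, Finset.mem_inter] at h2
    exact hnotboth e h1.1 ⟨h1.2, h2.2⟩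
  have hCyB : Cy.card = (Cy.biUnion sym2Finset).card := by
    have h0 : Cy.card = C₁.card + C₂.card := by
      rw [← hCyunion, Finset.card_union_of_disjoint hdisj]
    omega
  have hwlen : w.length = Cy.card := by
    rw [← hE, List.toFinset_card_of_nodup hw.isCircuit.isTrail.edges_nodup,
      SimpleGraph.Walk.length_edges]
  have hCyEvenCard : Even Cy.card := by
    rw [hCyB, hcard₁]; exact even_two_mul _
  have hCyEven : IsEvenCycleEdges G Cy :=
    ⟨v0, w, hw, by rw [hwlen]; exact hCyEvenCard, hE⟩
  have hcovM : ∀ u ∈ edgeVerts Cy, s(u, pt M u) ∈ Cy := by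
    intro u hu
    have huV₀ : u ∈ V₀ := hvV₀ u hu
    have huM : u ∈ edgeVerts M := by rw [hV]; exact huV₀
    by_cases hpp : pt M u = pt M₁ u
    · rw [hpp]; exact hcovM₁ u hu
    · obtain ⟨D, hD, hmD, hm1D⟩ :=
        core_even_cycle G hM hM₁ (hV.trans hV₁.symm) huM hpp
      have hDCy : D = Cy := hG D Cy hD hCyEven _ hm1D (hcovM₁ u hu)
      exact hDCy ▸ hmD
  have hMmatch : IsGMatching G (M ∩ Cy) := matching_subset hM Finset.inter_subset_left
  have hMverts : edgeVerts (M ∩ Cy) = edgeVerts Cy := by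
    apply Set.Subset.antisymm
    · rintro u ⟨e, he, hu⟩; exact ⟨e, (Finset.mem_inter.mp he).2, hu⟩
    · intro u hu
      have huM : u ∈ edgeVerts M := by rw [hV]; exact hvV₀ u hu
      exact ⟨s(u, pt M u), Finset.mem_inter.mpr ⟨pt_spec huM, hcovM u hu⟩,
        Sym2.mem_mk_left _ _⟩
  refine ⟨hMmatch, hMverts, ?_⟩
  calc 2 * (M ∩ Cy).card = ((M ∩ Cy).biUnion sym2Finset).card :=
        (card_biUnion_matching hMmatch).symm
    _ = (Cy.biUnion sym2Finset).card := by rw [biUnion_eq_of_edgeVerts_eq hMverts]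
    _ = Cy.card := hCyB.symm
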